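/- Let Γ_{1/2} = B Γ_∞ B⁻¹ where B = (1 0; 2 1) (so that B·∞ = 1/2), and let Γ̂_{1/2} be the subgroup of GL(2,ℤ) generated by Γ_{1/2} ∪ Γ_∞. For coprime integers q̃, p̃ with p̃ ≥ 1, the point q̃/p̃ of ℙ¹(ℚ) belongs to the Γ̂_{1/2}-orbit of 1/2 or of ∞ if and only if p̃ is even. [Example 3.3: r = 1/2, the Hopf link case] -/

import Mathlib

open Matrix

/-- The group `GL(2,ℤ)`. -/
abbrev GL2Z := Matrix.GeneralLinearGroup (Fin 2) ℤ

/-- The projective line `ℙ¹(ℚ)`. -/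
abbrev P1Q := Projectivization ℚ (Fin 2 → ℚ)

/-- The point `∞ = [1 : 0]` of `ℙ¹(ℚ)`. -/
noncomputable def infty : P1Q :=
  Projectivization.mk ℚ ![1, 0] (by
    intro h; simpa using congrFun h 0)

/-- The point `[x : 1]` of `ℙ¹(ℚ)` corresponding to the rational number `x`. -/
noncomputable def ratPt (x : ℚ) : P1Q :=
  Projectivization.mk ℚ ![x, 1] (by
    intro h; simpa using congrFun h 1)

/-- A matrix in `GL(2,ℤ)` viewed as an invertible matrix over `ℚ`. -/
def glq (M : GL2Z) : Matrix.GeneralLinearGroup (Fin 2) ℚ :=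
  Matrix.GeneralLinearGroup.map (Int.castRingHom ℚ) M

lemma glq_inj (M : GL2Z) :
    Function.Injective ((glq M).val.mulVecLin) := by
  have h : ((glq M)⁻¹).val.mulVecLin ∘ₗ (glq M).val.mulVecLin = LinearMap.id := by
    rw [← Matrix.mulVecLin_mul]
    have : ((glq M)⁻¹).val * (glq M).val = 1 := by
      rw [← Units.val_mul, inv_mul_cancel, Units.val_one]
    rw [this, Matrix.mulVecLin_one]
  intro x y hxy
  have := congrArg ((glq M)⁻¹).val.mulVecLin hxy
  calc x = (((glq M)⁻¹).val.mulVecLin ∘ₗ (glq M).val.mulVecLin) x := by rw [h]; rfl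
    _ = (((glq M)⁻¹).val.mulVecLin ∘ₗ (glq M).val.mulVecLin) y := by
        simpa using this
    _ = y := by rw [h]; rfl

/-- The action of `GL(2,ℤ)` on `ℙ¹(ℚ)` by linear fractional transformations:
`(a b; c d)` sends `[x : y]` to `[ax + by : cx + dy]`. -/
noncomputable def act (M : GL2Z) (x : P1Q) : P1Q :=
  Projectivization.map ((glq M).val.mulVecLin) (glq_inj M) x

/-- The matrix `A₁ = (-1 0; 0 1)`, acting by `x ↦ -x`. -/
def A1 : GL2Z :=
  ⟨!![-1, 0; 0, 1], !![-1, 0; 0, 1], by decide, by decide⟩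

/-- The matrix `A₂ = (-1 2; 0 1)`, acting by `x ↦ 2 - x`. -/
def A2 : GL2Z :=
  ⟨!![-1, 2; 0, 1], !![-1, 2; 0, 1], by decide, by decide⟩

/-- The group `Γ_∞`, generated by the reflections `A₁` and `A₂`. -/
def GammaInf : Subgroup GL2Z := Subgroup.closure {A1, A2}

/-- The group `Γ_r = B Γ_∞ B⁻¹`, for `B ∈ GL(2,ℤ)` with `B·∞ = r`. -/
def Gamma (B : GL2Z) : Subgroup GL2Z :=
  GammaInf.map (MulAut.conj B).toMonoidHom

/-- The group `Γ̂_r`, generated by `Γ_r ∪ Γ_∞`. -/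
def GammaHat (B : GL2Z) : Subgroup GL2Z := Gamma B ⊔ GammaInf

/-- The matrix `B = (1 0; 2 1)`, with `B·∞ = 1/2`. -/
def Bhalf : GL2Z :=
  ⟨!![1, 0; 2, 1], !![1, 0; -2, 1], by decide, by decide⟩

/-! Reduction mod 2 kills `A₁`, `A₂` and `B`, so every `M ∈ Γ̂_{1/2}` is `≡ 1 (mod 2)` and maps the
representatives `(1, 0)` of `∞` and `(1, 2)` of `1/2` to integer vectors `(odd, even)`; a point
`q̃/p̃` with such a representative has `p̃` even.

Conversely, `B` normalises `Γ̂_{1/2}` and `B² ∈ Γ̂_{1/2}`, so the union of the two orbits is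
invariant under `B`, hence under `T = (1 2; 0 1) = A₂A₁` and `B`. These act on integer vectors by
`(q, p) ↦ (q ± 2p, p)` and `(q, p) ↦ (q, p ± 2q)`, and a Euclidean descent brings any
`(odd, even)` vector to a multiple of `(1, 0)`, the representative of `∞`. -/

lemma act_one (x : P1Q) : act 1 x = x := by
  induction x using Projectivization.ind with
  | h v hv => simp [act, glq]

lemma act_mul (M N : GL2Z) (x : P1Q) : act (M * N) x = act M (act N x) := by
  induction x using Projectivization.ind with
  | h v hv =>
    simp only [act, Projectivization.map_mk]
    simp [glq]

lemma intCast_comp_ne_zero {ι : Type*} {v : ι → ℤ} (i : ι) (hi : v i ≠ 0) :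
    ((↑) ∘ v : ι → ℚ) ≠ 0 :=
  fun h => hi (by simpa using congrFun h i)

lemma glq_mulVec_intCast (M : GL2Z) (v : Fin 2 → ℤ) :
    (glq M).val *ᵥ ((↑) ∘ v) = ((↑) ∘ (M.val *ᵥ v) : Fin 2 → ℚ) := by
  ext i
  exact (RingHom.map_mulVec (Int.castRingHom ℚ) M.val v i).symm

lemma act_mk_intCast {M : GL2Z} {v w : Fin 2 → ℤ} (h : M.val *ᵥ v = w)
    (hv : ((↑) ∘ v : Fin 2 → ℚ) ≠ 0) (hw : ((↑) ∘ w : Fin 2 → ℚ) ≠ 0) :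
    act M (Projectivization.mk ℚ ((↑) ∘ v) hv) = Projectivization.mk ℚ ((↑) ∘ w) hw := by
  simp only [act, Projectivization.map_mk, Matrix.mulVecLin_apply, glq_mulVec_intCast, h]

lemma mulVec_cross_eq_of_act_mk_eq {M : GL2Z} {v w : Fin 2 → ℤ}
    {hv : ((↑) ∘ v : Fin 2 → ℚ) ≠ 0} {hw : ((↑) ∘ w : Fin 2 → ℚ) ≠ 0}
    (h : act M (Projectivization.mk ℚ ((↑) ∘ v) hv) = Projectivization.mk ℚ ((↑) ∘ w) hw) :
    (M.val *ᵥ v) 0 * w 1 = (M.val *ᵥ v) 1 * w 0 := by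
  rw [act, Projectivization.map_mk, Projectivization.mk_eq_mk_iff', Matrix.mulVecLin_apply,
    glq_mulVec_intCast] at h
  obtain ⟨a, ha⟩ := h
  have h0 : a * w 0 = (M.val *ᵥ v) 0 := by simpa using congrFun ha 0
  have h1 : a * w 1 = (M.val *ᵥ v) 1 := by simpa using congrFun ha 1
  have hℚ : ((M.val *ᵥ v) 0 * w 1 : ℚ) = (M.val *ᵥ v) 1 * w 0 := by rw [← h0, ← h1]; ring
  exact_mod_cast hℚ

lemma infty_eq_mk_intCast {c : ℤ} (hc : c ≠ 0) (hv : ((↑) ∘ ![c, 0] : Fin 2 → ℚ) ≠ 0) :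
    infty = Projectivization.mk ℚ ((↑) ∘ ![c, 0]) hv := by
  rw [infty, Projectivization.mk_eq_mk_iff']
  exact ⟨(c : ℚ)⁻¹, by ext i; fin_cases i <;> simp [hc]⟩

lemma ratPt_div_eq_mk_intCast (q : ℤ) {p : ℤ} (hp : p ≠ 0)
    (hv : ((↑) ∘ ![q, p] : Fin 2 → ℚ) ≠ 0) :
    ratPt (q / p) = Projectivization.mk ℚ ((↑) ∘ ![q, p]) hv := by
  rw [ratPt, Projectivization.mk_eq_mk_iff']
  exact ⟨(p : ℚ)⁻¹, by ext i; fin_cases i <;> simp [hp, div_eq_inv_mul]⟩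

lemma ratPt_half_eq_mk_intCast :
    ratPt (1 / 2) = Projectivization.mk ℚ ((↑) ∘ ![(1 : ℤ), 2])
      (intCast_comp_ne_zero (1 : Fin 2) two_ne_zero) := by
  have h := ratPt_div_eq_mk_intCast 1 two_ne_zero (intCast_comp_ne_zero (1 : Fin 2) two_ne_zero)
  rwa [Int.cast_one, Int.cast_two] at h

lemma act_infty_eq_ratPt_of_mulVec_eq {N : GL2Z} {c q p : ℤ}
    (hN : N.val *ᵥ ![c, 0] = ![q, p]) (hp : p ≠ 0) : act N infty = ratPt (q / p) := by
  have hc : c ≠ 0 := by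
    rintro rfl
    exact hp (by simpa using (congrFun hN 1).symm)
  rw [infty_eq_mk_intCast hc (intCast_comp_ne_zero (0 : Fin 2) hc),
    act_mk_intCast hN _ (intCast_comp_ne_zero (1 : Fin 2) hp), ratPt_div_eq_mk_intCast q hp]

lemma act_Bhalf_infty : act Bhalf infty = ratPt (1 / 2) := by
  have h : Bhalf.val *ᵥ ![1, 0] = ![1, 2] := by
    ext i; fin_cases i <;> simp [Bhalf, mulVec, dotProduct]
  have h' := act_infty_eq_ratPt_of_mulVec_eq h two_ne_zero
  rwa [Int.cast_one, Int.cast_two] at h'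

lemma map_conj_sup_le_of_mul_self_mem {G : Type*} [Group G] (K : Subgroup G) {g : G}
    (hg : g * g ∈ K.map (MulAut.conj g).toMonoidHom ⊔ K) :
    (K.map (MulAut.conj g).toMonoidHom ⊔ K).map (MulAut.conj g).toMonoidHom ≤
      K.map (MulAut.conj g).toMonoidHom ⊔ K := by
  rw [Subgroup.map_sup, Subgroup.map_map]
  refine sup_le ?_ le_sup_left
  rw [Subgroup.map_le_iff_le_comap]
  intro k hk
  have hconj : g * (g * k * g⁻¹) * g⁻¹ = (g * g) * k * (g * g)⁻¹ := by group
  simpa [MulAut.conj_apply, hconj] using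
    mul_mem (mul_mem hg (Subgroup.mem_sup_right hk)) (inv_mem hg)

def InOrbits (B : GL2Z) (x : P1Q) : Prop :=
  ∃ M ∈ GammaHat B, act M (act B infty) = x ∨ act M infty = x

section Orbits

variable {B : GL2Z}

lemma conj_mem_gammaHat (hB : B * B ∈ GammaHat B) {M : GL2Z} (hM : M ∈ GammaHat B) :
    B * M * B⁻¹ ∈ GammaHat B :=
  map_conj_sup_le_of_mul_self_mem GammaInf hB (Subgroup.mem_map_of_mem _ hM)

lemma inOrbits_infty : InOrbits B infty :=
  ⟨1, one_mem _, .inr (act_one _)⟩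

namespace InOrbits

variable {x : P1Q}

lemma act_of_mem {g : GL2Z} (hg : g ∈ GammaHat B) (hx : InOrbits B x) :
    InOrbits B (act g x) := by
  obtain ⟨M, hM, rfl | rfl⟩ := hx
  · exact ⟨g * M, mul_mem hg hM, .inl (act_mul _ _ _)⟩
  · exact ⟨g * M, mul_mem hg hM, .inr (act_mul _ _ _)⟩

lemma act_self (hB : B * B ∈ GammaHat B) (hx : InOrbits B x) : InOrbits B (act B x) := by
  obtain ⟨M, hM, rfl | rfl⟩ := hx
  · refine ⟨B * M * B⁻¹ * (B * B), mul_mem (conj_mem_gammaHat hB hM) hB, .inr ?_⟩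
    simp only [← act_mul]
    group
  · refine ⟨B * M * B⁻¹, conj_mem_gammaHat hB hM, .inl ?_⟩
    simp only [← act_mul]
    group

lemma act_inv_self (hB : B * B ∈ GammaHat B) (hx : InOrbits B x) :
    InOrbits B (act B⁻¹ x) := by
  have h := (hx.act_self hB).act_of_mem (inv_mem hB)
  rwa [← act_mul, show (B * B)⁻¹ * B = B⁻¹ by group] at h

lemma act_of_mem_closure (hB : B * B ∈ GammaHat B) {g : GL2Z}
    (hg : g ∈ Subgroup.closure (insert B (GammaHat B : Set GL2Z))) (hx : InOrbits B x) :
    InOrbits B (act g x) := by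
  induction hg using Subgroup.closure_induction'' generalizing x with
  | mem g hg =>
    rcases hg with rfl | hg
    exacts [hx.act_self hB, hx.act_of_mem hg]
  | inv_mem g hg =>
    rcases hg with rfl | hg
    exacts [hx.act_inv_self hB, hx.act_of_mem (inv_mem hg)]
  | one => rwa [act_one]
  | mul g h _ _ ihg ihh => rw [act_mul]; exact ihg (ihh hx)

end InOrbits

end Orbits

lemma Bhalf_mul_self_mem : Bhalf * Bhalf ∈ GammaHat Bhalf := by
  have h : Bhalf * Bhalf = Bhalf * A1 * Bhalf⁻¹ * A1 := by ext : 1; decide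
  rw [h]
  exact mul_mem
    (Subgroup.mem_sup_left (Subgroup.mem_map_of_mem _ (Subgroup.subset_closure (by simp))))
    (Subgroup.mem_sup_right (Subgroup.subset_closure (by simp)))

def T2 : GL2Z :=
  ⟨!![1, 2; 0, 1], !![1, -2; 0, 1], by decide, by decide⟩

lemma T2_mem : T2 ∈ GammaHat Bhalf := by
  have h : T2 = A2 * A1 := by ext : 1; decide
  rw [h]
  exact Subgroup.mem_sup_right
    (mul_mem (Subgroup.subset_closure (by simp)) (Subgroup.subset_closure (by simp)))

lemma T2_mulVec (x y : ℤ) : T2.val *ᵥ ![x, y] = ![x + 2 * y, y] := by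
  ext i; fin_cases i <;> simp [T2, mulVec, dotProduct, mul_comm]

lemma T2_inv_mulVec (x y : ℤ) : (T2⁻¹).val *ᵥ ![x, y] = ![x - 2 * y, y] := by
  ext i; fin_cases i <;> simp [T2, Units.inv_mk, mulVec, dotProduct, mul_comm, sub_eq_add_neg]

lemma Bhalf_mulVec (x y : ℤ) : Bhalf.val *ᵥ ![x, y] = ![x, 2 * x + y] := by
  ext i; fin_cases i <;> simp [Bhalf, mulVec, dotProduct]

lemma Bhalf_inv_mulVec (x y : ℤ) : (Bhalf⁻¹).val *ᵥ ![x, y] = ![x, y - 2 * x] := by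
  ext i; fin_cases i <;> simp [Bhalf, Units.inv_mk, mulVec, dotProduct]; ring

lemma exists_mulVec_eq_of_odd_of_even {H : Subgroup GL2Z} (hT : T2 ∈ H) (hB : Bhalf ∈ H)
    (q p : ℤ) (hq : Odd q) (hp : Even p) : ∃ N ∈ H, ∃ c : ℤ, N.val *ᵥ ![c, 0] = ![q, p] := by
  induction hn : q.natAbs + p.natAbs using Nat.strong_induction_on generalizing q p with
  | _ n ih =>
  have step : ∀ g ∈ H, ∀ q₀ p₀ : ℤ, q₀.natAbs + p₀.natAbs < n → Odd q₀ → Even p₀ →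
      g.val *ᵥ ![q₀, p₀] = ![q, p] → ∃ N ∈ H, ∃ c : ℤ, N.val *ᵥ ![c, 0] = ![q, p] := by
    intro g hg q₀ p₀ hlt hq₀ hp₀ hgv
    obtain ⟨N, hN, c, hc⟩ := ih _ hlt q₀ p₀ hq₀ hp₀ rfl
    exact ⟨g * N, mul_mem hg hN, c, by rw [Units.val_mul, ← mulVec_mulVec, hc, hgv]⟩
  -- `q` is odd and `p` even, so `|q| ≠ |p|`: unless `p = 0`, subtracting twice the smaller
  -- coordinate from the larger one with a suitable sign decreases `|q| + |p|`.
  have ⟨a, ha⟩ := hq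
  have ⟨b, hb⟩ := hp
  rcases (by omega : p = 0 ∨ (q - 2 * p).natAbs + p.natAbs < n ∨
      (q + 2 * p).natAbs + p.natAbs < n ∨ q.natAbs + (p - 2 * q).natAbs < n ∨
      q.natAbs + (p + 2 * q).natAbs < n) with h | h | h | h | h
  · exact ⟨1, one_mem H, q, by simp [h]⟩
  · exact step T2 hT _ _ h (hq.sub_even (even_two_mul p)) hp
      (by rw [T2_mulVec, sub_add_cancel])
  · exact step _ (inv_mem hT) _ _ h (hq.add_even (even_two_mul p)) hp
      (by rw [T2_inv_mulVec, add_sub_cancel_right])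
  · exact step Bhalf hB _ _ h hq (hp.sub (even_two_mul q))
      (by rw [Bhalf_mulVec, add_sub_cancel])
  · exact step _ (inv_mem hB) _ _ h hq (hp.add (even_two_mul q))
      (by rw [Bhalf_inv_mulVec, add_sub_cancel_right])

def reduceModTwo : GL2Z →* GL (Fin 2) (ZMod 2) :=
  Matrix.GeneralLinearGroup.map (Int.castRingHom (ZMod 2))

lemma gammaHat_le {B : GL2Z} {K : Subgroup GL2Z} (hA1 : A1 ∈ K) (hA2 : A2 ∈ K) (hB : B ∈ K) :
    GammaHat B ≤ K := by
  have hInf : GammaInf ≤ K :=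
    (Subgroup.closure_le K).2 (Set.insert_subset hA1 (Set.singleton_subset_iff.2 hA2))
  refine sup_le ?_ hInf
  rw [Gamma, Subgroup.map_le_iff_le_comap]
  exact fun M hM => mul_mem (mul_mem hB (hInf hM)) (inv_mem hB)

lemma gammaHat_Bhalf_le_ker : GammaHat Bhalf ≤ reduceModTwo.ker :=
  gammaHat_le (by ext : 1; decide) (by ext : 1; decide) (by ext : 1; decide)

lemma intCast_mulVec_of_mem_ker {M : GL2Z} (hM : M ∈ reduceModTwo.ker) (v : Fin 2 → ℤ) :
    ((↑) ∘ (M.val *ᵥ v) : Fin 2 → ZMod 2) = (↑) ∘ v := by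
  have h1 : M.val.map (Int.castRingHom (ZMod 2)) = 1 := congrArg Units.val hM
  ext i
  have h := RingHom.map_mulVec (Int.castRingHom (ZMod 2)) M.val v i
  rwa [h1, one_mulVec] at h

lemma even_of_act_mk_eq_ratPt {M : GL2Z} (hM : M ∈ reduceModTwo.ker) {v : Fin 2 → ℤ}
    (hv2 : ((↑) ∘ v : Fin 2 → ZMod 2) = ![1, 0]) {hv : ((↑) ∘ v : Fin 2 → ℚ) ≠ 0}
    {q p : ℤ} (hp : p ≠ 0)
    (h : act M (Projectivization.mk ℚ ((↑) ∘ v) hv) = ratPt (q / p)) : Even p := by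
  rw [ratPt_div_eq_mk_intCast q hp (intCast_comp_ne_zero (1 : Fin 2) hp)] at h
  have hcross := congrArg ((↑) : ℤ → ZMod 2) (mulVec_cross_eq_of_act_mk_eq h)
  have hMv := intCast_mulVec_of_mem_ker hM v ▸ hv2
  have h0 : ((M.val *ᵥ v) 0 : ZMod 2) = 1 := congrFun hMv 0
  have h1 : ((M.val *ᵥ v) 1 : ZMod 2) = 0 := congrFun hMv 1
  push_cast at hcross
  rw [h0, h1] at hcross
  simpa [ZMod.intCast_eq_zero_iff_even] using hcross

/-- **Example 3.3 (the Hopf link case `r = 1/2`).** For coprime `q̃, p̃` with `p̃ ≥ 1`,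
the point `q̃/p̃ ∈ ℙ¹(ℚ)` belongs to the `Γ̂_{1/2}`-orbit of `1/2` or of `∞` if and
only if `p̃` is even. -/
theorem mem_orbit_half_iff_even (q' p' : ℤ) (hp' : 1 ≤ p') (hqp' : Int.gcd q' p' = 1) :
    (∃ M ∈ GammaHat Bhalf,
        act M (ratPt (1 / 2)) = ratPt ((q' : ℚ) / (p' : ℚ)) ∨
        act M infty = ratPt ((q' : ℚ) / (p' : ℚ))) ↔
      Even p' := by
  have hp0 : p' ≠ 0 := by omega
  constructor
  · rintro ⟨M, hM, h | h⟩
    · rw [ratPt_half_eq_mk_intCast] at h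
      exact even_of_act_mk_eq_ratPt (gammaHat_Bhalf_le_ker hM) (by decide) hp0 h
    · rw [infty_eq_mk_intCast one_ne_zero (intCast_comp_ne_zero (0 : Fin 2) one_ne_zero)] at h
      exact even_of_act_mk_eq_ratPt (gammaHat_Bhalf_le_ker hM) (by decide) hp0 h
  · intro hp
    have hq : Odd q' := Int.isCoprime_two_right.1
      ((Int.isCoprime_iff_gcd_eq_one.2 hqp').of_isCoprime_of_dvd_right (even_iff_two_dvd.1 hp))
    obtain ⟨N, hN, c, hc⟩ := exists_mulVec_eq_of_odd_of_even
      (Subgroup.subset_closure (Set.mem_insert_of_mem _ T2_mem))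
      (Subgroup.subset_closure (Set.mem_insert _ _)) q' p' hq hp
    obtain ⟨M, hM, h⟩ := inOrbits_infty.act_of_mem_closure Bhalf_mul_self_mem hN
    rw [act_infty_eq_ratPt_of_mulVec_eq hc hp0, act_Bhalf_infty] at h
    exact ⟨M, hM, h⟩
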